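/- arXiv:2312.03334 — 2 statements merged into one kernel-verified Lean document; each statement's English description precedes it below -/
import Mathlib

section
/- Let A be a connected graph, let T be a tree, and let p : T → A be a covering morphism. Then there exists an isomorphism φ : T → T_A such that π ∘ φ = p (i.e. π₀ ∘ φ₀ = p₀ on vertices and π₁ ∘ φ₁ = p₁ on edges), where π : T_A → A is the universal covering morphism. In particular, up to isomorphism T_A is the unique tree admitting a covering morphism onto A. -/
/-! For a tree `T` the universal covering morphism `T_T → T` is an isomorphism, since its
vertex map is exactly the bijection defining a tree. A morphism `p : T → A` with unique path
lifting maps root paths of `T` bijectively onto root paths of `A`, and one-edge extensions of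
them likewise, so the induced map `T_T → T_A` is an isomorphism over `p`. Composing it with
the inverse of `T_T → T` gives `φ`. -/

/-- A rooted directed multigraph. -/
structure RGraph where
  V : Type
  E : Type
  s : E → V
  t : E → V
  root : V

namespace RGraph

/-- `l` is a path: consecutive edges are composable. -/
def IsPath (A : RGraph) (l : List A.E) : Prop :=
  l.IsChain (fun e f => A.t e = A.s f)

/-- `l` is a path starting at the vertex `q`. -/
def PathFrom (A : RGraph) (q : A.V) (l : List A.E) : Prop :=
  A.IsPath l ∧ ∀ e ∈ l.head?, A.s e = q

/-- The target of the path `l` started at `q` (equal to `q` for the empty path). -/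
def pathTarget (A : RGraph) (q : A.V) (l : List A.E) : A.V :=
  l.foldl (fun _ e => A.t e) q

@[simp] lemma pathTarget_nil (A : RGraph) (q : A.V) : A.pathTarget q [] = q := rfl

@[simp] lemma pathTarget_cons (A : RGraph) (q : A.V) (a : A.E) (l : List A.E) :
    A.pathTarget q (a :: l) = A.pathTarget (A.t a) l := rfl

lemma pathTarget_append (A : RGraph) (q : A.V) (l l' : List A.E) :
    A.pathTarget q (l ++ l') = A.pathTarget (A.pathTarget q l) l' := by
  simp [pathTarget]

@[simp] lemma pathTarget_append_single (A : RGraph) (q : A.V) (l : List A.E) (e : A.E) :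
    A.pathTarget q (l ++ [e]) = A.t e := by
  rw [pathTarget_append]; rfl

lemma pathFrom_nil (A : RGraph) (q : A.V) : A.PathFrom q [] :=
  ⟨List.isChain_nil, by simp⟩

lemma pathTarget_getLast {A : RGraph} {q : A.V} {l : List A.E} {x : A.E}
    (hx : x ∈ l.getLast?) : A.pathTarget q l = A.t x := by
  induction l generalizing q with
  | nil => simp at hx
  | cons a l ih =>
    cases l with
    | nil => simp at hx; subst hx; rfl
    | cons b l =>
      rw [List.getLast?_cons_cons] at hx
      simpa using ih (q := A.t a) hx

lemma pathFrom_append_single {A : RGraph} {q : A.V} {l : List A.E} {e : A.E}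
    (h : A.PathFrom q l) (he : A.s e = A.pathTarget q l) :
    A.PathFrom q (l ++ [e]) := by
  constructor
  · apply List.isChain_append.mpr
    refine ⟨h.1, List.isChain_singleton _, ?_⟩
    intro x hx y hy
    simp at hy
    subst hy
    rw [he]
    exact (pathTarget_getLast hx).symm
  · intro f hf
    cases l with
    | nil =>
      simp at hf
      subst hf
      simpa using he
    | cons a l =>
      simp at hf
      subst hf
      exact h.2 a (by simp)

/-- `w` is reachable from `q` by an oriented path. -/
def Reach (A : RGraph) (q w : A.V) : Prop :=
  ∃ l, A.PathFrom q l ∧ A.pathTarget q l = w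

lemma reach_self (A : RGraph) (q : A.V) : A.Reach q q :=
  ⟨[], A.pathFrom_nil q, rfl⟩

lemma reach_target {A : RGraph} {q : A.V} {e : A.E} (h : A.Reach q (A.s e)) :
    A.Reach q (A.t e) := by
  obtain ⟨l, hl, ht⟩ := h
  exact ⟨l ++ [e], pathFrom_append_single hl ht.symm, by simp⟩

/-- A graph is connected (as a rooted directed graph) if every vertex is reachable
from the root. -/
def Connected (A : RGraph) : Prop := ∀ w : A.V, A.Reach A.root w

/-- A graph is a tree if the target map from paths emanating from the root to
vertices is a bijection. -/
def IsTree (A : RGraph) : Prop :=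
  Function.Bijective
    (fun l : {l : List A.E // A.PathFrom A.root l} => A.pathTarget A.root l.1)

/-- A graph is locally finite if every vertex has finitely many outgoing edges. -/
def LocallyFinite (A : RGraph) : Prop := ∀ q : A.V, Finite {e : A.E // A.s e = q}

/-- Adjacency: there is an edge from `v` to `w`. -/
def Adj (A : RGraph) (v w : A.V) : Prop := ∃ e, A.s e = v ∧ A.t e = w

/-- The induced rooted subgraph on all vertices reachable from `q` (the "cone" at `q`). -/
def subgraph (A : RGraph) (q : A.V) : RGraph where
  V := {w // A.Reach q w}
  E := {e // A.Reach q (A.s e)}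
  s := fun e => ⟨A.s e.1, e.2⟩
  t := fun e => ⟨A.t e.1, reach_target e.2⟩
  root := ⟨q, A.reach_self q⟩

/-- The truncation of the cone at `v` to vertices at distance at most `d` from `v`. -/
def trunc (A : RGraph) (v : A.V) (d : ℕ) : RGraph where
  V := {w // ∃ l, A.PathFrom v l ∧ A.pathTarget v l = w ∧ l.length ≤ d}
  E := {e // ∃ l, A.PathFrom v l ∧ A.pathTarget v l = A.s e ∧ l.length < d}
  s := fun e => ⟨A.s e.1, e.2.imp fun _ h => ⟨h.1, h.2.1, h.2.2.le⟩⟩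
  t := fun e => ⟨A.t e.1, by
    obtain ⟨l, h1, h2, h3⟩ := e.2
    exact ⟨l ++ [e.1], pathFrom_append_single h1 h2.symm, by simp,
      by simp only [List.length_append, List.length_singleton]; omega⟩⟩
  root := ⟨v, [], A.pathFrom_nil v, rfl, Nat.zero_le d⟩

/-- The universal covering tree of `A`: vertices are the paths emanating from the root. -/
def cover (A : RGraph) : RGraph where
  V := {l : List A.E // A.PathFrom A.root l}
  E := {x : {l : List A.E // A.PathFrom A.root l} × A.E //
          A.s x.2 = A.pathTarget A.root x.1.1}
  s := fun x => x.1.1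
  t := fun x => ⟨x.1.1.1 ++ [x.1.2], pathFrom_append_single x.1.1.2 x.2⟩
  root := ⟨[], A.pathFrom_nil _⟩

end RGraph

/-- A morphism of rooted directed multigraphs. -/
structure GraphHom (A B : RGraph) where
  v : A.V → B.V
  e : A.E → B.E
  root_eq : v A.root = B.root
  s_eq : ∀ x, B.s (e x) = v (A.s x)
  t_eq : ∀ x, B.t (e x) = v (A.t x)

namespace GraphHom

variable {A B : RGraph}

/-- The unique path lifting property. -/
def UPLP (p : GraphHom A B) : Prop :=
  ∀ (q : A.V) (l' : List B.E), B.PathFrom (p.v q) l' →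
    ∃! l : List A.E, A.PathFrom q l ∧ l.map p.e = l'

/-- A covering morphism: surjective on vertices, with the unique path lifting property. -/
def IsCovering (p : GraphHom A B) : Prop := Function.Surjective p.v ∧ p.UPLP

/-- An isomorphism of graphs: bijective on vertices and on edges. -/
def IsIso (p : GraphHom A B) : Prop := Function.Bijective p.v ∧ Function.Bijective p.e

/-- The restriction of the edge map to the edges emanating from `q`. -/
def outMap (p : GraphHom A B) (q : A.V) :
    {e : A.E // A.s e = q} → {e' : B.E // B.s e' = p.v q} :=
  fun e => ⟨p.e e.1, by rw [p.s_eq, e.2]⟩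

lemma isPath_map (p : GraphHom A B) {l : List A.E} (h : A.IsPath l) :
    B.IsPath (l.map p.e) := by
  rw [RGraph.IsPath, List.isChain_map]
  exact List.IsChain.imp (fun a b hab => by rw [p.t_eq, p.s_eq, hab]) h

lemma pathFrom_map (p : GraphHom A B) {q : A.V} {l : List A.E} (h : A.PathFrom q l) :
    B.PathFrom (p.v q) (l.map p.e) := by
  refine ⟨p.isPath_map h.1, ?_⟩
  intro f hf
  cases l with
  | nil => simp at hf
  | cons a l =>
    simp at hf
    subst hf
    rw [p.s_eq, h.2 a (by simp)]

lemma pathTarget_map (p : GraphHom A B) (q : A.V) (l : List A.E) :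
    B.pathTarget (p.v q) (l.map p.e) = p.v (A.pathTarget q l) := by
  induction l generalizing q with
  | nil => rfl
  | cons a l ih =>
    show B.pathTarget (B.t (p.e a)) (l.map p.e) = _
    rw [p.t_eq]
    exact ih (A.t a)

lemma reach_map (p : GraphHom A B) {q w : A.V} (h : A.Reach q w) :
    B.Reach (p.v q) (p.v w) := by
  obtain ⟨l, hl, ht⟩ := h
  exact ⟨l.map p.e, p.pathFrom_map hl, by rw [p.pathTarget_map, ht]⟩

end GraphHom

/-- Two graphs are isomorphic. -/
def RGraph.Iso (A B : RGraph) : Prop := ∃ p : GraphHom A B, p.IsIso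

/-- The universal covering morphism from the universal covering tree of `A` to `A`. -/
def RGraph.uCover (A : RGraph) : GraphHom A.cover A where
  v := fun l => A.pathTarget A.root l.1
  e := fun x => x.1.2
  root_eq := rfl
  s_eq := fun x => x.2
  t_eq := fun x => by
    show A.t x.1.2 = A.pathTarget A.root (x.1.1.1 ++ [x.1.2])
    simp

/-- The morphism induced between universal covering trees by a morphism of graphs. -/
def GraphHom.coverMap {A B : RGraph} (p : GraphHom A B) : GraphHom A.cover B.cover where
  v := fun l => ⟨l.1.map p.e, by have := p.pathFrom_map l.2; rwa [p.root_eq] at this⟩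
  e := fun x =>
    ⟨(⟨x.1.1.1.map p.e, by have := p.pathFrom_map x.1.1.2; rwa [p.root_eq] at this⟩,
      p.e x.1.2), by
        show B.s (p.e x.1.2) = B.pathTarget B.root (x.1.1.1.map p.e)
        rw [p.s_eq, x.2, ← p.root_eq, p.pathTarget_map]⟩
  root_eq := Subtype.ext rfl
  s_eq := fun _ => rfl
  t_eq := fun x => by
    apply Subtype.ext
    simp [RGraph.cover]

/-- `A` is a covering quotient of `T`. -/
def IsCovQuotient (T A : RGraph) : Prop := ∃ p : GraphHom T A, p.IsCovering

/-- `A` is a minimal covering quotient of `T`: a covering quotient with the minimal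
number of vertices among all covering quotients of `T`. -/
def IsMinCovQuotient (T A : RGraph) : Prop :=
  IsCovQuotient T A ∧
    ∀ B : RGraph, IsCovQuotient T B → Cardinal.mk A.V ≤ Cardinal.mk B.V

/-- `T` has finitely many cone types. -/
def FinManyCones (T : RGraph) : Prop :=
  ∃ S : Set T.V, S.Finite ∧ ∀ v : T.V, ∃ w ∈ S, RGraph.Iso (T.subgraph v) (T.subgraph w)

/-- A self-similar tree: a locally finite tree with finitely many cone types. -/
def SelfSimilarTree (T : RGraph) : Prop := T.IsTree ∧ T.LocallyFinite ∧ FinManyCones T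

namespace RGraph

/-- The automorphism group of a graph, realized as the group of root-preserving,
adjacency-preserving permutations of the vertex set (for trees this is the same as the
automorphism group in the sense of graph morphisms, since in a tree an edge is determined
by its endpoints). -/
def autGroup (T : RGraph) : Subgroup (Equiv.Perm T.V) where
  carrier := {g | g T.root = T.root ∧ ∀ v w, T.Adj v w ↔ T.Adj (g v) (g w)}
  one_mem' := ⟨rfl, fun _ _ => Iff.rfl⟩
  mul_mem' := by
    rintro a b ⟨ha1, ha2⟩ ⟨hb1, hb2⟩
    refine ⟨?_, fun v w => ?_⟩
    · show a (b T.root) = T.root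
      rw [hb1, ha1]
    · exact (hb2 v w).trans (ha2 (b v) (b w))
  inv_mem' := by
    rintro a ⟨ha1, ha2⟩
    refine ⟨?_, fun v w => ?_⟩
    · show a.symm T.root = T.root
      rw [Equiv.symm_apply_eq]
      exact ha1.symm
    · have h := ha2 (a⁻¹ v) (a⁻¹ w)
      simpa using h.symm

/-- The subgroup of permutations of the vertices fixing every vertex outside
of the cone at `v`. -/
def fixOutside (T : RGraph) (v : T.V) : Subgroup (Equiv.Perm T.V) where
  carrier := {g | ∀ w, ¬ T.Reach v w → g w = w}
  one_mem' := fun _ _ => rfl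
  mul_mem' := by
    intro a b ha hb w hw
    show a (b w) = w
    rw [hb w hw, ha w hw]
  inv_mem' := by
    intro a ha w hw
    show a.symm w = w
    rw [Equiv.symm_apply_eq]
    exact (ha w hw).symm

/-- The rigid stabilizer of the vertex `v`: automorphisms fixing every vertex
outside the subtree spanned by `v` and its descendants. -/
def rist (T : RGraph) (v : T.V) : Subgroup (Equiv.Perm T.V) :=
  T.autGroup ⊓ T.fixOutside v

/-- The set of vertices at distance `n` from the root. -/
def level (T : RGraph) (n : ℕ) : Set T.V :=
  {v | ∃ l : List T.E, T.PathFrom T.root l ∧ T.pathTarget T.root l = v ∧ l.length = n}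

/-- The `n`-th rigid level stabilizer: the subgroup generated by the rigid stabilizers
of the vertices at distance `n` from the root. -/
def ristLevel (T : RGraph) (n : ℕ) : Subgroup (Equiv.Perm T.V) :=
  ⨆ v ∈ T.level n, T.rist v

/-- The `n`-th rigid level stabilizer, as a subgroup of the automorphism group. -/
def ristIn (T : RGraph) (n : ℕ) : Subgroup ↥T.autGroup :=
  (T.ristLevel n).comap T.autGroup.subtype

end RGraph

/-- A recurrent double edge: a pair of distinct parallel edges such that there is an
oriented loop which contains one of them, or from which their common source can be
reached. -/
def HasRecDoubleEdge (A : RGraph) : Prop :=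
  ∃ e₁ e₂ : A.E, e₁ ≠ e₂ ∧ A.s e₁ = A.s e₂ ∧ A.t e₁ = A.t e₂ ∧
    ((∃ (q : A.V) (l : List A.E),
        A.PathFrom q l ∧ l ≠ [] ∧ A.pathTarget q l = q ∧ (e₁ ∈ l ∨ e₂ ∈ l)) ∨
     (∃ (q : A.V) (l : List A.E),
        A.PathFrom q l ∧ l ≠ [] ∧ A.pathTarget q l = q ∧ A.Reach q (A.s e₁)))

/-- A deterministic finite automaton over the alphabet `A`, with a partial transition
function, a single initial state, and all states accepting. -/
structure PDFA (A : Type) where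
  Q : Type
  finQ : Finite Q
  neQ : Nonempty Q
  δ : Q → A → Option Q
  init : Q

namespace PDFA

variable {A : Type} (M : PDFA A)

/-- Running the automaton from state `q` on a word; `none` if it gets stuck. -/
def run : M.Q → List A → Option M.Q
  | q, [] => some q
  | q, a :: w => (M.δ q a).bind fun q' => run q' w

/-- The regular language accepted by `M`. -/
def Lang : Set (List A) := {w | (M.run M.init w).isSome}

lemma run_append (q : M.Q) (u w : List A) :
    M.run q (u ++ w) = (M.run q u).bind fun q' => M.run q' w := by
  induction u generalizing q with
  | nil => simp [run]
  | cons a u ih =>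
    simp only [List.cons_append, run]
    cases M.δ q a with
    | none => simp
    | some q' => simp [ih]

lemma isSome_of_append {q : M.Q} {u w : List A}
    (h : (M.run q (u ++ w)).isSome) : (M.run q u).isSome := by
  rw [run_append] at h
  cases hu : M.run q u with
  | none => rw [hu] at h; simp at h
  | some q' => simp

/-- The path language tree of `M`: the tree whose vertices are the words of the
language of `M`, with an edge from `w` to `w ++ [a]` whenever both belong to the
language. -/
def pathTree : RGraph where
  V := {w : List A // (M.run M.init w).isSome}
  E := {x : List A × A // (M.run M.init (x.1 ++ [x.2])).isSome}
  s := fun x => ⟨x.1.1, M.isSome_of_append x.2⟩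
  t := fun x => ⟨x.1.1 ++ [x.1.2], x.2⟩
  root := ⟨[], by simp [run]⟩

/-- The underlying rooted directed multigraph of the automaton `M`. -/
def underlying : RGraph where
  V := M.Q
  E := {x : M.Q × A // (M.δ x.1 x.2).isSome}
  s := fun x => x.1.1
  t := fun x => (M.δ x.1.1 x.1.2).get x.2
  root := M.init

/-- `M` is geometrically minimal: it has the minimal number of states among all DFAs
(over arbitrary finite nonempty alphabets) whose path language trees are isomorphic,
as unlabelled rooted trees, to the path language tree of `M`. -/
def GeomMinimal : Prop :=
  ∀ (B : Type), Finite B → Nonempty B → ∀ N : PDFA B,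
    RGraph.Iso M.pathTree N.pathTree → Nat.card M.Q ≤ Nat.card N.Q

/-- The state reached after reading the word `w` of the language. -/
def qstate (w : List A) (h : (M.run M.init w).isSome) : M.Q :=
  (M.run M.init w).get h

/-- The group of admissible permutations at the state `q`: permutations `τ` of the
alphabet fixing the letters outside `Σ(q)` and satisfying `δ(q, τ a) = δ(q, a)`. -/
def SymQ (q : M.Q) : Subgroup (Equiv.Perm A) where
  carrier := {τ | ∀ a, M.δ q (τ a) = M.δ q a ∧ (M.δ q a = none → τ a = a)}
  one_mem' := fun _ => ⟨rfl, fun _ => rfl⟩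
  mul_mem' := by
    intro τ₁ τ₂ h1 h2 a
    constructor
    · show M.δ q (τ₁ (τ₂ a)) = M.δ q a
      rw [(h1 (τ₂ a)).1, (h2 a).1]
    · intro hn
      show τ₁ (τ₂ a) = a
      rw [(h2 a).2 hn, (h1 a).2 hn]
  inv_mem' := by
    intro τ h a
    have h1 := (h (τ.symm a)).1
    rw [Equiv.apply_symm_apply] at h1
    constructor
    · show M.δ q (τ.symm a) = M.δ q a
      exact h1.symm
    · intro hn
      have h2 := (h (τ.symm a)).2 (h1.symm.trans hn)
      rw [Equiv.apply_symm_apply] at h2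
      show τ.symm a = a
      exact h2.symm

end PDFA

/-- Extending a portrait to a map on words (the first argument is the accumulated
prefix): the `i`-th letter of the image word is the image of the `i`-th letter under
the local injection at the prefix of length `i - 1`. -/
def portraitExtend {A : Type} (σ : List A → A → A) : List A → List A → List A
  | _, [] => []
  | pre, a :: w => σ pre a :: portraitExtend σ (pre ++ [a]) w


lemma RGraph.pathFrom_singleton {A : RGraph} {q : A.V} {e : A.E} :
    A.PathFrom q [e] ↔ A.s e = q :=
  ⟨fun h => h.2 e rfl, fun h => ⟨List.isChain_singleton e, by simpa using h⟩⟩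

namespace GraphHom

variable {A B C : RGraph}

def comp (q : GraphHom B C) (p : GraphHom A B) : GraphHom A C where
  v := q.v ∘ p.v
  e := q.e ∘ p.e
  root_eq := by simp only [Function.comp_apply, p.root_eq, q.root_eq]
  s_eq x := by simp only [Function.comp_apply, p.s_eq, q.s_eq]
  t_eq x := by simp only [Function.comp_apply, p.t_eq, q.t_eq]

lemma IsIso.comp {q : GraphHom B C} {p : GraphHom A B} (hq : q.IsIso) (hp : p.IsIso) :
    (q.comp p).IsIso :=
  ⟨hq.1.comp hp.1, hq.2.comp hp.2⟩

noncomputable def inv (p : GraphHom A B) (hp : p.IsIso) : GraphHom B A where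
  v := (Equiv.ofBijective _ hp.1).symm
  e := (Equiv.ofBijective _ hp.2).symm
  root_eq := hp.1.1 <| (Equiv.ofBijective_apply_symm_apply _ _ _).trans p.root_eq.symm
  s_eq x := hp.1.1 <| ((p.s_eq _).symm.trans
    (congrArg B.s (Equiv.ofBijective_apply_symm_apply _ _ x))).trans
    (Equiv.ofBijective_apply_symm_apply _ _ _).symm
  t_eq x := hp.1.1 <| ((p.t_eq _).symm.trans
    (congrArg B.t (Equiv.ofBijective_apply_symm_apply _ _ x))).trans
    (Equiv.ofBijective_apply_symm_apply _ _ _).symm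

lemma v_inv (p : GraphHom A B) (hp : p.IsIso) (x : B.V) : p.v ((p.inv hp).v x) = x :=
  (Equiv.ofBijective _ hp.1).apply_symm_apply x

lemma e_inv (p : GraphHom A B) (hp : p.IsIso) (x : B.E) : p.e ((p.inv hp).e x) = x :=
  (Equiv.ofBijective _ hp.2).apply_symm_apply x

lemma IsIso.inv {p : GraphHom A B} (hp : p.IsIso) : (p.inv hp).IsIso :=
  ⟨(Equiv.ofBijective _ hp.1).symm.bijective, (Equiv.ofBijective _ hp.2).symm.bijective⟩

lemma UPLP.map_injective {p : GraphHom A B} (hp : p.UPLP) {q : A.V} {l₁ l₂ : List A.E}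
    (h₁ : A.PathFrom q l₁) (h₂ : A.PathFrom q l₂) (h : l₁.map p.e = l₂.map p.e) : l₁ = l₂ :=
  (hp q _ (p.pathFrom_map h₁)).unique ⟨h₁, rfl⟩ ⟨h₂, h.symm⟩

lemma UPLP.coverMap_isIso {p : GraphHom A B} (hp : p.UPLP) : p.coverMap.IsIso := by
  have lift_root : ∀ l' : B.cover.V, ∃ l : A.cover.V, l.1.map p.e = l'.1 := fun ⟨l', hl'⟩ =>
    have ⟨l, ⟨hl, hmap⟩, _⟩ := hp A.root l' (p.root_eq ▸ hl')
    ⟨⟨l, hl⟩, hmap⟩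
  have v_inj : Function.Injective p.coverMap.v := fun l₁ l₂ h =>
    Subtype.ext (hp.map_injective l₁.2 l₂.2 (congrArg Subtype.val h))
  refine ⟨⟨v_inj, fun l' => (lift_root l').imp fun _ h => Subtype.ext h⟩, ?_, ?_⟩
  · rintro ⟨⟨l₁, e₁⟩, he₁⟩ ⟨⟨l₂, e₂⟩, he₂⟩ h
    obtain rfl : l₁ = l₂ := v_inj (congrArg (fun x => x.1.1) h)
    have hp_e : p.e e₁ = p.e e₂ := congrArg (fun x => x.1.2) h
    obtain rfl : e₁ = e₂ := List.singleton_injective <| hp.map_injective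
      (RGraph.pathFrom_singleton.2 he₁) (RGraph.pathFrom_singleton.2 he₂) (by simp [hp_e])
    rfl
  · rintro ⟨⟨l', e'⟩, he'⟩
    obtain ⟨l, hl⟩ := lift_root l'
    have hse' : B.s e' = p.v (A.pathTarget A.root l.1) := by
      rw [he', ← hl, ← p.pathTarget_map, p.root_eq]
    obtain ⟨m, ⟨hm, hme⟩, -⟩ := hp _ [e'] (RGraph.pathFrom_singleton.2 hse')
    obtain ⟨e, rfl, rfl⟩ := List.map_eq_singleton_iff.1 hme
    exact ⟨⟨(l, e), RGraph.pathFrom_singleton.1 hm⟩, Subtype.ext (Prod.ext (Subtype.ext hl) rfl)⟩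

lemma uCover_v_coverMap (p : GraphHom A B) (l : A.cover.V) :
    B.uCover.v (p.coverMap.v l) = p.v (A.uCover.v l) := by
  show B.pathTarget B.root (l.1.map p.e) = p.v (A.pathTarget A.root l.1)
  rw [← p.root_eq, p.pathTarget_map]

end GraphHom

lemma RGraph.IsTree.uCover_isIso {T : RGraph} (hT : T.IsTree) : T.uCover.IsIso := by
  refine ⟨hT, fun x y h => ?_, fun e => ?_⟩
  · have hl : x.1.1 = y.1.1 := hT.1 ((x.2.symm.trans (congrArg T.s h)).trans y.2)
    exact Subtype.ext (Prod.ext hl h)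
  · obtain ⟨l, hl⟩ := hT.2 (T.s e)
    exact ⟨⟨(l, e), hl.symm⟩, rfl⟩

theorem stmt5_general (A T : RGraph) (hT : T.IsTree)
    (p : GraphHom T A) (hp : p.IsCovering) :
    ∃ φ : GraphHom T A.cover, φ.IsIso ∧
      (∀ x : T.V, A.uCover.v (φ.v x) = p.v x) ∧
      (∀ x : T.E, A.uCover.e (φ.e x) = p.e x) := by
  refine ⟨p.coverMap.comp (T.uCover.inv hT.uCover_isIso),
    hp.2.coverMap_isIso.comp hT.uCover_isIso.inv, fun x => ?_, fun x => ?_⟩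
  · exact (p.uCover_v_coverMap _).trans (congrArg p.v (T.uCover.v_inv hT.uCover_isIso x))
  · exact congrArg p.e (T.uCover.e_inv hT.uCover_isIso x)

/-- If `A` is connected, `T` is a tree and `p : T → A` is a covering
morphism, then there is an isomorphism `φ : T → T_A` intertwining `p` with the
universal covering morphism `π : T_A → A`. In particular, up to isomorphism, `T_A` is
the unique tree covering `A`. -/
theorem stmt5 (A T : RGraph) (hA : A.Connected) (hT : T.IsTree)
    (p : GraphHom T A) (hp : p.IsCovering) :
    ∃ φ : GraphHom T A.cover, φ.IsIso ∧
      (∀ x : T.V, A.uCover.v (φ.v x) = p.v x) ∧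
      (∀ x : T.E, A.uCover.e (φ.e x) = p.e x) :=
  stmt5_general A T hT p hp
end

section
/- If 𝒜 and 𝒜' are two geometrically minimal DFAs whose path language trees are isomorphic to each other as unlabelled rooted trees (i.e., both are geometrically minimal automata for the same self-similar tree), then the underlying rooted directed multigraphs of 𝒜 and 𝒜' are isomorphic. -/
/-!
Call a relation between the states of two automata a bisimulation when related states have
equinumerous sets of enabled letters, matched bijectively so that the successors along matched
letters are again related. An isomorphism of path trees is the same thing as a bisimulation
relating the initial states: one direction reads off the states reached along corresponding
words, the other transports words letter by letter.

A geometrically minimal automaton has every state reachable and no two distinct bisimilar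
states, since otherwise deleting the unreachable states, or merging two bisimilar ones, gives an
automaton with fewer states and an isomorphic path tree. So for two geometrically minimal
automata with isomorphic path trees, bisimilarity is the graph of a bijection of states, and
the matchings of enabled letters assemble into a bijection of edges.
-/

namespace GraphHom

variable {G H : RGraph}

theorem IsIso.adj_iff {p : GraphHom G H} (hp : p.IsIso) (x y : G.V) :
    G.Adj x y ↔ H.Adj (p.v x) (p.v y) := by
  constructor
  · rintro ⟨e, rfl, rfl⟩
    exact ⟨p.e e, p.s_eq e, p.t_eq e⟩
  · rintro ⟨e', hs, ht⟩
    obtain ⟨e, rfl⟩ := hp.2.2 e'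
    exact ⟨e, hp.1.1 (by rw [← p.s_eq, hs]), hp.1.1 (by rw [← p.t_eq, ht])⟩

end GraphHom

namespace RGraph

variable {G H : RGraph}

theorem iso_of_adj_iff (F : G.V ≃ H.V) (hroot : F G.root = H.root)
    (hG : Function.Injective fun e : G.E => (G.s e, G.t e))
    (hH : Function.Injective fun e : H.E => (H.s e, H.t e))
    (hF : ∀ x y, G.Adj x y ↔ H.Adj (F x) (F y)) : G.Iso H := by
  choose f hfs hft using fun e : G.E => (hF (G.s e) (G.t e)).1 ⟨e, rfl, rfl⟩
  refine ⟨⟨F, f, hroot, hfs, hft⟩, F.bijective, fun e₁ e₂ he => hG ?_, fun e' => ?_⟩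
  · change f e₁ = f e₂ at he
    have hs := hfs e₁
    have ht := hft e₁
    rw [he, hfs, F.apply_eq_iff_eq] at hs
    rw [he, hft, F.apply_eq_iff_eq] at ht
    simp [hs, ht]
  · obtain ⟨e, hs, ht⟩ := (hF (F.symm (H.s e')) (F.symm (H.t e'))).2
      (by simpa using ⟨e', rfl, rfl⟩)
    refine ⟨e, hH ?_⟩
    simp [hfs, hft, hs, ht]

end RGraph

namespace PDFA

variable {A B C : Type}

section Run

variable (M : PDFA A)

/-- The letters enabled at `q`, written `Σ(q)` in the paper. -/
abbrev Out (q : M.Q) : Type := {a : A // (M.δ q a).isSome}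

def step (q : M.Q) (a : M.Out q) : M.Q := (M.δ q a.1).get a.2

variable {M}

theorem δ_eq_some_step {q : M.Q} (a : M.Out q) : M.δ q a.1 = some (M.step q a) :=
  (Option.some_get a.2).symm

theorem run_cons_step {q : M.Q} (a : M.Out q) (w : List A) :
    M.run q (a.1 :: w) = M.run (M.step q a) w := by
  simp [run, δ_eq_some_step]

theorem exists_out_of_run_cons {q : M.Q} {a : A} {w : List A} (h : (M.run q (a :: w)).isSome) :
    ∃ a' : M.Out q, a'.1 = a := by
  cases hq : M.δ q a
  · simp [run, hq] at h
  · exact ⟨⟨a, by simp [hq]⟩, rfl⟩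

theorem run_append_singleton {q p : M.Q} {w : List A} (hw : M.run q w = some p) (a : A) :
    M.run q (w ++ [a]) = M.δ p a := by
  rw [run_append, hw]
  cases h : M.δ p a <;> simp [run, h]

end Run

section Bisimulation

def IsBisim (M : PDFA A) (N : PDFA B) (R : M.Q → N.Q → Prop) : Prop :=
  ∀ q q', R q q' → ∃ β : M.Out q ≃ N.Out q', ∀ a, R (M.step q a) (N.step q' (β a))

def Bisimilar (M : PDFA A) (N : PDFA B) (q : M.Q) (q' : N.Q) : Prop :=
  ∃ R, IsBisim M N R ∧ R q q'

variable {M : PDFA A} {N : PDFA B} {P : PDFA C}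

theorem isBisim_eq : IsBisim M M Eq := by
  rintro q _ rfl
  exact ⟨Equiv.refl _, fun _ => rfl⟩

theorem IsBisim.flip {R : M.Q → N.Q → Prop} (hR : IsBisim M N R) : IsBisim N M (flip R) := by
  intro q' q h
  obtain ⟨β, hβ⟩ := hR q q' h
  exact ⟨β.symm, fun b => by simpa [_root_.flip] using hβ (β.symm b)⟩

theorem IsBisim.comp {R : M.Q → N.Q → Prop} {S : N.Q → P.Q → Prop} (hR : IsBisim M N R)
    (hS : IsBisim N P S) : IsBisim M P (Relation.Comp R S) := by
  rintro q q'' ⟨q', h, h'⟩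
  obtain ⟨β, hβ⟩ := hR q q' h
  obtain ⟨γ, hγ⟩ := hS q' q'' h'
  exact ⟨β.trans γ, fun a => ⟨_, hβ a, hγ (β a)⟩⟩

theorem isBisim_bisimilar : IsBisim M N (Bisimilar M N) := by
  rintro q q' ⟨R, hR, h⟩
  obtain ⟨β, hβ⟩ := hR q q' h
  exact ⟨β, fun a => ⟨R, hR, hβ a⟩⟩

theorem Bisimilar.refl (q : M.Q) : Bisimilar M M q q := ⟨Eq, isBisim_eq, rfl⟩

theorem Bisimilar.symm {q : M.Q} {q' : N.Q} (h : Bisimilar M N q q') : Bisimilar N M q' q := by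
  obtain ⟨R, hR, h⟩ := h
  exact ⟨flip R, hR.flip, h⟩

theorem Bisimilar.trans {q : M.Q} {q' : N.Q} {q'' : P.Q} (h : Bisimilar M N q q')
    (h' : Bisimilar N P q' q'') : Bisimilar M P q q'' := by
  obtain ⟨R, hR, h⟩ := h
  obtain ⟨S, hS, h'⟩ := h'
  exact ⟨_, hR.comp hS, q', h, h'⟩

end Bisimulation

variable {M : PDFA A} {N : PDFA B}

namespace IsBisim

variable {R : M.Q → N.Q → Prop} (hR : IsBisim M N R)

noncomputable def equiv {q : M.Q} {q' : N.Q} (h : R q q') : M.Out q ≃ N.Out q' :=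
  (hR q q' h).choose

theorem rel_step {q : M.Q} {q' : N.Q} (h : R q q') (a : M.Out q) :
    R (M.step q a) (N.step q' (hR.equiv h a)) :=
  (hR q q' h).choose_spec a

noncomputable def transport : ∀ {q : M.Q} {q' : N.Q}, R q q' → List A → List B
  | _, _, _, [] => []
  | q, _, h, a :: w =>
    if ha : (M.δ q a).isSome then
      (hR.equiv h ⟨a, ha⟩).1 :: transport (hR.rel_step h ⟨a, ha⟩) w
    else []

theorem transport_nil {q : M.Q} {q' : N.Q} (h : R q q') : hR.transport h [] = [] := by
  simp [transport]

theorem transport_cons {q : M.Q} {q' : N.Q} (h : R q q') (a : M.Out q) (w : List A) :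
    hR.transport h (a.1 :: w) = (hR.equiv h a).1 :: hR.transport (hR.rel_step h a) w := by
  simp [transport, a.2]

theorem run_transport {q : M.Q} {q' : N.Q} (h : R q q') {w : List A} {p : M.Q}
    (hw : M.run q w = some p) : ∃ p', N.run q' (hR.transport h w) = some p' ∧ R p p' := by
  induction w generalizing q q' with
  | nil =>
    obtain rfl : q = p := Option.some_injective _ hw
    exact ⟨q', by rw [transport_nil]; rfl, h⟩
  | cons a w ih =>
    obtain ⟨a, rfl⟩ := exists_out_of_run_cons (show (M.run q (a :: w)).isSome by rw [hw]; rfl)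
    rw [run_cons_step] at hw
    rw [transport_cons, run_cons_step]
    exact ih (hR.rel_step h a) hw

theorem isSome_run_transport {q : M.Q} {q' : N.Q} (h : R q q') {w : List A}
    (hw : (M.run q w).isSome) : (N.run q' (hR.transport h w)).isSome := by
  obtain ⟨p, hp⟩ := Option.isSome_iff_exists.1 hw
  obtain ⟨p', hp', -⟩ := hR.run_transport h hp
  simp [hp']

theorem transport_append_singleton {q : M.Q} {q' : N.Q} (h : R q q') {w : List A} {a : A}
    (hw : (M.run q (w ++ [a])).isSome) :
    ∃ b, hR.transport h (w ++ [a]) = hR.transport h w ++ [b] := by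
  induction w generalizing q q' with
  | nil =>
    obtain ⟨a, rfl⟩ := exists_out_of_run_cons hw
    exact ⟨(hR.equiv h a).1, by simp [transport_cons, transport_nil]⟩
  | cons c w ih =>
    obtain ⟨c, rfl⟩ := exists_out_of_run_cons hw
    rw [List.cons_append, run_cons_step] at hw
    obtain ⟨b, hb⟩ := ih (hR.rel_step h c) hw
    exact ⟨b, by simp [transport_cons, hb]⟩

theorem eq_of_transport_eq {q : M.Q} {q' : N.Q} (h : R q q') {w₁ w₂ : List A}
    (hw₁ : (M.run q w₁).isSome) (hw₂ : (M.run q w₂).isSome)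
    (he : hR.transport h w₁ = hR.transport h w₂) : w₁ = w₂ := by
  induction w₁ generalizing q q' w₂ with
  | nil =>
    cases w₂ with
    | nil => rfl
    | cons a w₂ =>
      obtain ⟨a, rfl⟩ := exists_out_of_run_cons hw₂
      simp [transport_cons, transport_nil] at he
  | cons a₁ w₁ ih =>
    obtain ⟨a₁, rfl⟩ := exists_out_of_run_cons hw₁
    cases w₂ with
    | nil => simp [transport_cons, transport_nil] at he
    | cons a₂ w₂ =>
      obtain ⟨a₂, rfl⟩ := exists_out_of_run_cons hw₂
      rw [transport_cons, transport_cons, List.cons.injEq] at he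
      obtain rfl := (hR.equiv h).injective (Subtype.ext he.1)
      rw [run_cons_step] at hw₁ hw₂
      rw [ih (hR.rel_step h a₁) hw₁ hw₂ he.2]

theorem exists_transport_eq {q : M.Q} {q' : N.Q} (h : R q q') {w' : List B}
    (hw' : (N.run q' w').isSome) : ∃ w, (M.run q w).isSome ∧ hR.transport h w = w' := by
  induction w' generalizing q q' with
  | nil => exact ⟨[], rfl, transport_nil hR h⟩
  | cons b w' ih =>
    obtain ⟨b, rfl⟩ := exists_out_of_run_cons hw'
    obtain ⟨a, rfl⟩ := (hR.equiv h).surjective b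
    rw [run_cons_step] at hw'
    obtain ⟨w, hw, rfl⟩ := ih (hR.rel_step h a) hw'
    exact ⟨a.1 :: w, by rwa [run_cons_step], transport_cons hR h a w⟩

end IsBisim

theorem IsBisim.underlying_iso {R : M.Q → N.Q → Prop} (hR : IsBisim M N R)
    (h0 : R M.init N.init) (hu : Relator.BiUnique R) (ht : Relator.BiTotal R) :
    RGraph.Iso M.underlying N.underlying := by
  choose φ hφ using ht.1
  have hφ_iff : ∀ q q', R q q' ↔ φ q = q' :=
    fun q q' => ⟨fun h => hu.2 (hφ q) h, fun h => h ▸ hφ q⟩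
  have hφ_bij : Function.Bijective φ :=
    ⟨fun q₁ q₂ he => hu.1 (hφ q₁) (he ▸ hφ q₂),
      fun q' => (ht.2 q').imp fun q h => (hφ_iff q q').1 h⟩
  let edges : M.underlying.E ≃ N.underlying.E :=
    (Equiv.subtypeProdEquivSigmaSubtype _).trans
      ((Equiv.sigmaCongr (Equiv.ofBijective φ hφ_bij) fun q => hR.equiv (hφ q)).trans
        (Equiv.subtypeProdEquivSigmaSubtype _).symm)
  refine ⟨⟨φ, edges, (hφ_iff _ _).1 h0, fun _ => rfl, fun e => ?_⟩, hφ_bij,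
    edges.bijective⟩
  exact ((hφ_iff _ _).1 (hR.rel_step (hφ e.1.1) ⟨e.1.2, e.2⟩)).symm

section PathTree

theorem pathTree_adj_iff {x y : M.pathTree.V} :
    M.pathTree.Adj x y ↔ ∃ a, y.1 = x.1 ++ [a] := by
  constructor
  · rintro ⟨⟨⟨w, a⟩, h⟩, rfl, rfl⟩
    exact ⟨a, rfl⟩
  · rintro ⟨a, ha⟩
    exact ⟨⟨(x.1, a), ha ▸ y.2⟩, rfl, Subtype.ext ha.symm⟩

theorem pathTree_st_injective :
    Function.Injective fun e : M.pathTree.E => (M.pathTree.s e, M.pathTree.t e) := by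
  rintro ⟨⟨w₁, a₁⟩, h₁⟩ ⟨⟨w₂, a₂⟩, h₂⟩ he
  have ht : w₁ ++ [a₁] = w₂ ++ [a₂] := congrArg (fun e => e.2.1) he
  obtain ⟨rfl, rfl⟩ : w₁ = w₂ ∧ a₁ = a₂ := by simpa using ht
  rfl

variable (M) in
noncomputable def childrenEquivOut (x : M.pathTree.V) {q : M.Q}
    (hx : M.run M.init x.1 = some q) : M.Out q ≃ {y : M.pathTree.V // M.pathTree.Adj x y} :=
  Equiv.ofBijective
    (fun a => ⟨⟨x.1 ++ [a.1], by simp [run_append_singleton hx, a.2]⟩,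
      pathTree_adj_iff.2 ⟨a.1, rfl⟩⟩)
    ⟨fun a b hab => Subtype.ext (by simpa using congrArg (fun y => y.1.1) hab), fun y => by
      obtain ⟨a, ha⟩ := pathTree_adj_iff.1 y.2
      have hy := y.1.2
      rw [ha, run_append_singleton hx] at hy
      exact ⟨⟨a, hy⟩, Subtype.ext (Subtype.ext ha.symm)⟩⟩

theorem run_childrenEquivOut (x : M.pathTree.V) {q : M.Q} (hx : M.run M.init x.1 = some q)
    (a : M.Out q) : M.run M.init (M.childrenEquivOut x hx a).1.1 = some (M.step q a) :=
  (run_append_singleton hx a.1).trans (δ_eq_some_step a)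

theorem isBisim_of_adj_iff (F : M.pathTree.V ≃ N.pathTree.V)
    (hF : ∀ x y, M.pathTree.Adj x y ↔ N.pathTree.Adj (F x) (F y)) :
    IsBisim M N fun q q' =>
      ∃ x : M.pathTree.V, M.run M.init x.1 = some q ∧ N.run N.init (F x).1 = some q' := by
  rintro q q' ⟨x, hx, hx'⟩
  let β := (M.childrenEquivOut x hx).trans
    ((F.subtypeEquiv (hF x)).trans (N.childrenEquivOut (F x) hx').symm)
  refine ⟨β, fun a => ⟨_, run_childrenEquivOut x hx a, ?_⟩⟩
  have hβ : N.childrenEquivOut (F x) hx' (β a) =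
      F.subtypeEquiv (hF x) (M.childrenEquivOut x hx a) :=
    Equiv.apply_symm_apply _ _
  rw [← run_childrenEquivOut (F x) hx', hβ]
  rfl

theorem bisimilar_of_pathTree_iso (h : RGraph.Iso M.pathTree N.pathTree) :
    Bisimilar M N M.init N.init := by
  obtain ⟨p, hp⟩ := h
  refine ⟨_, isBisim_of_adj_iff (Equiv.ofBijective p.v hp.1) hp.adj_iff, M.pathTree.root, rfl,
    ?_⟩
  change N.run N.init (p.v M.pathTree.root).1 = some N.init
  rw [p.root_eq]
  rfl

theorem pathTree_iso_of_isBisim {R : M.Q → N.Q → Prop} (hR : IsBisim M N R)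
    (h0 : R M.init N.init) : RGraph.Iso M.pathTree N.pathTree := by
  let F : M.pathTree.V → N.pathTree.V :=
    fun x => ⟨hR.transport h0 x.1, hR.isSome_run_transport h0 x.2⟩
  have hF : Function.Bijective F := by
    refine ⟨fun x y hxy => Subtype.ext
      (hR.eq_of_transport_eq h0 x.2 y.2 (congrArg Subtype.val hxy)), fun y => ?_⟩
    obtain ⟨w, hw, hwy⟩ := hR.exists_transport_eq h0 y.2
    exact ⟨⟨w, hw⟩, Subtype.ext hwy⟩
  refine RGraph.iso_of_adj_iff (Equiv.ofBijective F hF) (Subtype.ext (hR.transport_nil h0))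
    pathTree_st_injective pathTree_st_injective fun x y => ?_
  rw [pathTree_adj_iff, pathTree_adj_iff]
  change (∃ a, y.1 = x.1 ++ [a]) ↔ ∃ b, hR.transport h0 y.1 = hR.transport h0 x.1 ++ [b]
  constructor
  · rintro ⟨a, ha⟩
    obtain ⟨b, hb⟩ := hR.transport_append_singleton h0 (ha ▸ y.2)
    exact ⟨b, by rw [ha, hb]⟩
  · rintro ⟨b, hb⟩
    -- `y` is not the root, as its image has a parent; the parent `z` of `y` and `x` then have
    -- the same image.
    obtain hy | ⟨z, a, hz⟩ := List.eq_nil_or_concat' y.1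
    · simp [hy, hR.transport_nil] at hb
    · have hzy := hz ▸ y.2
      obtain ⟨c, hc⟩ := hR.transport_append_singleton h0 hzy
      rw [hz, hc] at hb
      obtain rfl : z = x.1 :=
        hR.eq_of_transport_eq h0 (M.isSome_of_append hzy) x.2 (List.append_inj' hb rfl).1
      exact ⟨a, hz⟩

end PathTree

section Minimality

-- Deleting the unreachable states and merging two bisimilar states are both of this form.
def restrict (M : PDFA A) (S : Set M.Q) (r : M.Q → S) : PDFA A where
  Q := S
  finQ := @Subtype.finite _ M.finQ _
  neQ := ⟨r M.init⟩
  δ p a := (M.δ p a).map r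
  init := r M.init

theorem isBisim_restrict {S : Set M.Q} {r : M.Q → S}
    (hr : ∀ (p : S) (a : M.Out p), Bisimilar M M (M.step p a) (r (M.step p a))) :
    IsBisim M (M.restrict S r) fun q (p : S) => Bisimilar M M q p := by
  intro q (p : S) h
  obtain ⟨β, hβ⟩ := isBisim_bisimilar (N := M) q p h
  let γ : M.Out p ≃ (M.restrict S r).Out p :=
    Equiv.subtypeEquivRight fun a => by simp [restrict]
  refine ⟨β.trans γ, fun a => (hβ a).trans ?_⟩
  have hstep : ((M.restrict S r).step p (γ (β a)) : S).1 = r (M.step p (β a)) := by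
    simp only [step, restrict, Option.get_map]
    rfl
  change Bisimilar M M _ ((M.restrict S r).step p (γ (β a)) : S).1
  rw [hstep]
  exact hr p (β a)

theorem GeomMinimal.eq_univ_of_bisimilar_redirect (hM : M.GeomMinimal) (hA : Finite A)
    (hA' : Nonempty A) {S : Set M.Q} (r : M.Q → S) (h0 : Bisimilar M M M.init (r M.init))
    (hr : ∀ (p : S) (a : M.Out p), Bisimilar M M (M.step p a) (r (M.step p a))) :
    S = Set.univ := by
  have hcard := hM A hA hA' _ (pathTree_iso_of_isBisim (isBisim_restrict hr) h0)
  by_contra hS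
  obtain ⟨q, hq⟩ := (Set.ne_univ_iff_exists_notMem S).1 hS
  have := M.finQ
  exact (Finite.card_subtype_lt hq).not_ge hcard

theorem GeomMinimal.exists_run_eq_some (hM : M.GeomMinimal) (hA : Finite A) (hA' : Nonempty A)
    (q : M.Q) : ∃ w, M.run M.init w = some q := by
  classical
  let S : Set M.Q := {q | ∃ w, M.run M.init w = some q}
  have hS : ∀ (p : S) (a : M.Out p), M.step p a ∈ S := fun p a =>
    let ⟨w, hw⟩ := p.2
    ⟨w ++ [a.1], (run_append_singleton hw a.1).trans (δ_eq_some_step a)⟩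
  let r : M.Q → S := fun q => if h : q ∈ S then ⟨q, h⟩ else ⟨M.init, [], rfl⟩
  have hr : ∀ q ∈ S, (r q : M.Q) = q := fun q h => by simp [r, h]
  have hSuniv : S = Set.univ := hM.eq_univ_of_bisimilar_redirect hA hA' r
    (by rw [hr _ ⟨[], rfl⟩]; exact .refl _) fun p a => by rw [hr _ (hS p a)]; exact .refl _
  exact (hSuniv ▸ Set.mem_univ q : q ∈ S)

theorem GeomMinimal.eq_of_bisimilar (hM : M.GeomMinimal) (hA : Finite A) (hA' : Nonempty A)
    {q₁ q₂ : M.Q} (h : Bisimilar M M q₁ q₂) : q₁ = q₂ := by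
  classical
  by_contra hne
  let r : M.Q → {q | q ≠ q₂} :=
    fun q => if hq : q = q₂ then ⟨q₁, hne⟩ else ⟨q, hq⟩
  have hr : ∀ q, Bisimilar M M q (r q) := by
    intro q
    by_cases hq : q = q₂
    · subst hq
      simpa [r] using h.symm
    · simpa [r, hq] using Bisimilar.refl q
  have hSuniv := hM.eq_univ_of_bisimilar_redirect hA hA' r (hr _) fun _ _ => hr _
  exact (hSuniv.symm ▸ Set.mem_univ q₂ : q₂ ∈ {q | q ≠ q₂}) rfl

end Minimality

end PDFA

/-- Uniqueness of geometrically minimal DFAs. If `M` and `N` are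
geometrically minimal DFAs whose path language trees are isomorphic as unlabelled
rooted trees, then the underlying rooted directed multigraphs of `M` and `N` are
isomorphic. -/
theorem stmt14 {A B : Type} (hA : Finite A) (hA' : Nonempty A)
    (hB : Finite B) (hB' : Nonempty B) (M : PDFA A) (N : PDFA B)
    (hM : M.GeomMinimal) (hN : N.GeomMinimal)
    (h : RGraph.Iso M.pathTree N.pathTree) :
    RGraph.Iso M.underlying N.underlying := by
  have h0 : PDFA.Bisimilar M N M.init N.init := PDFA.bisimilar_of_pathTree_iso h
  refine PDFA.isBisim_bisimilar.underlying_iso h0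
    ⟨fun _ _ _ h₁ h₂ => hM.eq_of_bisimilar hA hA' (h₁.trans h₂.symm),
      fun _ _ _ h₁ h₂ => hN.eq_of_bisimilar hB hB' (h₁.symm.trans h₂)⟩
    ⟨fun q => ?_, fun q' => ?_⟩
  · obtain ⟨w, hw⟩ := hM.exists_run_eq_some hA hA' q
    obtain ⟨q', -, hq'⟩ := PDFA.isBisim_bisimilar.run_transport h0 hw
    exact ⟨q', hq'⟩
  · obtain ⟨w, hw⟩ := hN.exists_run_eq_some hB hB' q'
    obtain ⟨q, -, hq⟩ := PDFA.isBisim_bisimilar.run_transport h0.symm hw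
    exact ⟨q, hq.symm⟩
end
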